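/- arXiv:1006.5688 — 3 statements merged into one kernel-verified Lean document; each statement's English description precedes it below -/
import Mathlib

section
/- Suppose the code C contains no codeword of Hamming weight 1. Then for every codeword u ∈ C (identified with a 0/1 point of ℝ^n), the Jacobian matrix of the rational map f at u is the zero matrix: ∂f_i/∂u_j(u) = 0 for all i, j ∈ {1,…,n}. (Here f is differentiable at u since H(u) = 1 ≠ 0.) Hence every codeword is a stable fixed point of f. -/
open Matrix Finset

/-- The codeword polynomial `F_x(u) = ∏ i, ρ_i(u_i)` with `ρ_i(u_i) = u_i` if `x_i = 1`
and `1 - u_i` if `x_i = 0`. -/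
noncomputable def codePoly {n : ℕ} (x : Fin n → ZMod 2) (u : Fin n → ℝ) : ℝ :=
  ∏ i, if x i = 1 then u i else 1 - u i

/-- The linear code `C = {mG : m ∈ 𝔽₂^k}` generated by the matrix `G`. -/
def code {k n : ℕ} (G : Matrix (Fin k) (Fin n) (ZMod 2)) : Finset (Fin n → ZMod 2) :=
  Finset.image (fun m => Matrix.vecMul m G) Finset.univ

/-- `H(u) = Σ_{x ∈ C} F_x(u)`. -/
noncomputable def Hfun {k n : ℕ} (G : Matrix (Fin k) (Fin n) (ZMod 2)) (u : Fin n → ℝ) : ℝ :=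
  ∑ x ∈ code G, codePoly x u

/-- `I_i(u) = Σ_{x ∈ C, x_i = 1} F_x(u)`. -/
noncomputable def Ifun {k n : ℕ} (G : Matrix (Fin k) (Fin n) (ZMod 2)) (i : Fin n)
    (u : Fin n → ℝ) : ℝ :=
  ∑ x ∈ (code G).filter (fun x => x i = 1), codePoly x u

/-- The rational map `f_i(u) = I_i(u)/H(u)`. -/
noncomputable def fmap {k n : ℕ} (G : Matrix (Fin k) (Fin n) (ZMod 2)) (i : Fin n)
    (u : Fin n → ℝ) : ℝ :=
  Ifun G i u / Hfun G u

/-- The point `p = (1/2, …, 1/2) ∈ ℝ^n`. -/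
noncomputable def pcenter (n : ℕ) : Fin n → ℝ := fun _ => 1/2

/-- Identification of a binary word with a 0/1 point of `ℝ^n`. -/
noncomputable def embed {n : ℕ} (w : Fin n → ZMod 2) : Fin n → ℝ :=
  fun i => if w i = 1 then 1 else 0

/-!
At a codeword `u`, the factor of `F_x` at a coordinate `i` with `x i ≠ u i` vanishes. Along the
coordinate line `u + t eⱼ` only the coordinate `j` moves, so every `F_x` with `x ≠ u` still has a
vanishing factor unless `x - u` has weight one, which is excluded. Hence on that line
`H = F_u` and `I_i = [u_i = 1] F_u`, so `f_i` is constant near `u` along every coordinate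
direction and all partial derivatives vanish.
-/

lemma exists_ne_ne_of_hammingDist_ne_one {ι : Type*} [Fintype ι] {β : ι → Type*}
    [∀ i, DecidableEq (β i)] {x y : ∀ i, β i} (hxy : x ≠ y) (h : hammingDist x y ≠ 1)
    (j : ι) : ∃ i ≠ j, x i ≠ y i := by
  by_contra! hagree
  refine h (le_antisymm (Finset.card_le_one.2 fun a ha b hb => ?_) (hammingDist_pos.2 hxy))
  simp only [Finset.mem_filter] at ha hb
  rw [not_imp_comm.1 (hagree a) ha.2, not_imp_comm.1 (hagree b) hb.2]

lemma sub_mem_code {k n : ℕ} (G : Matrix (Fin k) (Fin n) (ZMod 2))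
    {x y : Fin n → ZMod 2} (hx : x ∈ code G) (hy : y ∈ code G) : x - y ∈ code G := by
  simp only [code, Finset.mem_image, Finset.mem_univ, true_and] at *
  obtain ⟨m, rfl⟩ := hx
  obtain ⟨m', rfl⟩ := hy
  exact ⟨m - m', Matrix.sub_vecMul G m m'⟩

lemma hammingDist_ne_one_of_mem_code {k n : ℕ} {G : Matrix (Fin k) (Fin n) (ZMod 2)}
    (hwt : ∀ x ∈ code G, hammingNorm x ≠ 1)
    {x y : Fin n → ZMod 2} (hx : x ∈ code G) (hy : y ∈ code G) : hammingDist x y ≠ 1 := by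
  rw [hammingDist_comm, hammingDist_eq_hammingNorm, neg_add_eq_sub]
  exact hwt _ (sub_mem_code G hx hy)

lemma codePoly_embed_self {n : ℕ} (u : Fin n → ZMod 2) : codePoly u (embed u) = 1 :=
  Finset.prod_eq_one fun i _ => by by_cases h : u i = 1 <;> simp [embed, h]

lemma codePoly_eq_zero_of_ne {n : ℕ} {x u : Fin n → ZMod 2} {v : Fin n → ℝ} {i : Fin n}
    (hv : v i = embed u i) (hx : x i ≠ u i) : codePoly x v = 0 := by
  refine Finset.prod_eq_zero (Finset.mem_univ i) ?_
  have hZMod2 : ∀ a b : ZMod 2, a ≠ 1 → b ≠ 1 → a = b := by decide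
  rw [hv, embed]
  by_cases hx1 : x i = 1 <;> by_cases hu1 : u i = 1 <;>
    simp only [hx1, hu1, if_true, if_false, sub_self, sub_zero]
  · exact absurd (hx1.trans hu1.symm) hx
  · exact absurd (hZMod2 _ _ hx1 hu1) hx

lemma differentiable_codePoly {n : ℕ} (x : Fin n → ZMod 2) :
    Differentiable ℝ (codePoly x) := by
  have hfactor : ∀ i, Differentiable ℝ fun v : Fin n → ℝ => if x i = 1 then v i else 1 - v i :=
    fun i => by split_ifs <;> fun_prop
  unfold codePoly
  fun_prop

section CodewordLine

variable {k n : ℕ} {G : Matrix (Fin k) (Fin n) (ZMod 2)}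
  {u : Fin n → ZMod 2} {v : Fin n → ℝ} {j : Fin n}

lemma sum_codePoly_of_agree_off
    (hwt : ∀ x ∈ code G, hammingNorm x ≠ 1) (hu : u ∈ code G) (hv : ∀ i ≠ j, v i = embed u i)
    {S : Finset (Fin n → ZMod 2)} (hS : S ⊆ code G) :
    ∑ x ∈ S, codePoly x v = if u ∈ S then codePoly u v else 0 := by
  have hvanish : ∀ x ∈ S, x ≠ u → codePoly x v = 0 := fun x hx hxu => by
    obtain ⟨i, hij, hxi⟩ := exists_ne_ne_of_hammingDist_ne_one hxu
      (hammingDist_ne_one_of_mem_code hwt (hS hx) hu) j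
    exact codePoly_eq_zero_of_ne (hv i hij) hxi
  split_ifs with huS
  · exact Finset.sum_eq_single_of_mem u huS hvanish
  · exact Finset.sum_eq_zero fun x hx => hvanish x hx (ne_of_mem_of_not_mem hx huS)

lemma fmap_of_agree_off
    (hwt : ∀ x ∈ code G, hammingNorm x ≠ 1) (hu : u ∈ code G) (hv : ∀ i ≠ j, v i = embed u i)
    (hv0 : codePoly u v ≠ 0) (i : Fin n) :
    fmap G i v = if u i = 1 then 1 else 0 := by
  rw [fmap, Hfun, Ifun, sum_codePoly_of_agree_off hwt hu hv (filter_subset _ _),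
    sum_codePoly_of_agree_off hwt hu hv subset_rfl, if_pos hu]
  simp only [mem_filter, hu, true_and]
  split_ifs
  · exact div_self hv0
  · exact zero_div _

end CodewordLine

lemma Hfun_embed {k n : ℕ} {G : Matrix (Fin k) (Fin n) (ZMod 2)} {u : Fin n → ZMod 2}
    (hu : u ∈ code G) : Hfun G (embed u) = 1 := by
  rw [Hfun, Finset.sum_eq_single_of_mem u hu, codePoly_embed_self]
  intro x _ hxu
  obtain ⟨i, hi⟩ := Function.ne_iff.1 hxu
  exact codePoly_eq_zero_of_ne rfl hi

lemma differentiableAt_fmap {k n : ℕ} (G : Matrix (Fin k) (Fin n) (ZMod 2)) (i : Fin n)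
    {v : Fin n → ℝ} (hv : Hfun G v ≠ 0) : DifferentiableAt ℝ (fmap G i) v := by
  have hsum : ∀ S : Finset (Fin n → ZMod 2), Differentiable ℝ fun w => ∑ x ∈ S, codePoly x w :=
    fun S => Differentiable.fun_sum fun x _ => differentiable_codePoly x
  have hH : Differentiable ℝ (Hfun G) := hsum _
  have hI : Differentiable ℝ (Ifun G i) := hsum _
  unfold fmap
  fun_prop (disch := exact hv)

theorem stmt5_general {k n : ℕ}
    (G : Matrix (Fin k) (Fin n) (ZMod 2))
    (hwt : ∀ x ∈ code G, (Finset.univ.filter (fun i : Fin n => x i ≠ 0)).card ≠ 1)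
    (u : Fin n → ZMod 2) (hu : u ∈ code G) :
    Hfun G (embed u) = 1 ∧
    ∀ i j : Fin n, fderiv ℝ (fmap G i) (embed u) (Pi.single j 1) = 0 := by
  refine ⟨Hfun_embed hu, fun i j => ?_⟩
  set line : ℝ → Fin n → ℝ := fun t => embed u + t • Pi.single j 1
  have hline : ∀ t, ∀ l ≠ j, line t l = embed u l := fun t l hl => by simp [line, hl]
  have hnonzero : ∀ᶠ t in nhds 0, codePoly u (line t) ≠ 0 := by
    refine ((differentiable_codePoly u).continuous.comp (by fun_prop)).continuousAt.eventually_ne ?_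
    simp [line, codePoly_embed_self]
  have hconst : (fun t => fmap G i (line t)) =ᶠ[nhds 0] fun _ => if u i = 1 then 1 else 0 :=
    hnonzero.mono fun t ht => fmap_of_agree_off hwt hu (hline t) ht i
  rw [← (differentiableAt_fmap G i (by simp [Hfun_embed hu])).lineDeriv_eq_fderiv, lineDeriv,
    hconst.deriv_eq, deriv_const]

/-- If the code contains no codeword of Hamming weight 1, then at every codeword `u ∈ C`
(identified with a 0/1 point of `ℝ^n`) one has `H(u) = 1` and the Jacobian matrix of the
rational map `f` is the zero matrix: `∂f_i/∂u_j(u) = 0` for all `i, j`. -/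
theorem stmt5 {k n : ℕ} (hk : 0 < k) (hkn : k ≤ n)
    (G : Matrix (Fin k) (Fin n) (ZMod 2))
    (hrank : G.rank = k) (hcols : ∀ i : Fin n, Gᵀ i ≠ 0)
    (hwt : ∀ x ∈ code G, (Finset.univ.filter (fun i : Fin n => x i ≠ 0)).card ≠ 1)
    (u : Fin n → ZMod 2) (hu : u ∈ code G) :
    Hfun G (embed u) = 1 ∧
    ∀ i j : Fin n, fderiv ℝ (fmap G i) (embed u) (Pi.single j 1) = 0 :=
  stmt5_general G hwt u hu
end

section
/- Let l ≥ 2 and i_1,…,i_l ∈ {1,…,n}. The mixed partial derivative ∂^l H/∂u_{i_1}⋯∂u_{i_l}(p) equals 0 if either some index is repeated among i_1,…,i_l, or the indices are distinct and g_{i_1} + ⋯ + g_{i_l} ≠ 0 in 𝔽₂^k. If the indices are distinct and g_{i_1} + ⋯ + g_{i_l} = 0, then ∂^l H/∂u_{i_1}⋯∂u_{i_l}(p) = (−1)^l · 2^{−n+k+l}. -/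
open Matrix Finset

/-!
Put `v = u - p`. Each codeword polynomial factors as `F_x(u) = ∏ i, (1/2 - (-1)^(x_i) v_i)`;
expanding the product and summing over `x = mG` (injective in `m` because `rank G = k`) gives
`H = ∑_S (-1)^|S| 2^(|S|-n) (∑_m (-1)^(m ⬝ g_S)) v^S` with `g_S = ∑_{i ∈ S} g_i`, and
orthogonality of characters of `𝔽₂^k` turns the inner sum into `2^k [g_S = 0]`. A polynomial
that is affine in each `v_i` has vanishing derivatives with a repeated index, and at `v = 0` the
mixed derivative `∂_{i_1}⋯∂_{i_l}` extracts the coefficient of `v_{i_1}⋯v_{i_l}`.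
-/

theorem iteratedFDeriv_succ_apply_right_of_contDiff {𝕜 E F : Type*}
    [NontriviallyNormedField 𝕜] [NormedAddCommGroup E] [NormedSpace 𝕜 E]
    [NormedAddCommGroup F] [NormedSpace 𝕜 F]
    {f : E → F} (hf : ContDiff 𝕜 ⊤ f) {l : ℕ} (x : E) (m : Fin (l + 1) → E) :
    iteratedFDeriv 𝕜 (l + 1) f x m =
      iteratedFDeriv 𝕜 l (fun y => fderiv 𝕜 f y (m (Fin.last l))) x (Fin.init m) := by
  rw [iteratedFDeriv_succ_apply_right,
    ← iteratedFDeriv_clm_apply_const_apply (hf.fderiv_right le_top) le_top]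

section ShiftedMonomial

variable {ι : Type*} (a : ι → ℝ)

def shiftedMonomial (S : Finset ι) (u : ι → ℝ) : ℝ := ∏ i ∈ S, (u i - a i)

theorem shiftedMonomial_self_of_nonempty {S : Finset ι} (hS : S.Nonempty) :
    shiftedMonomial a S a = 0 :=
  Finset.prod_eq_zero hS.choose_spec (sub_self _)

variable [Fintype ι]

theorem contDiff_shiftedMonomial (S : Finset ι) : ContDiff ℝ ⊤ (shiftedMonomial a S) :=
  contDiff_prod fun i _ => (contDiff_apply ℝ ℝ i).sub contDiff_const

theorem fderiv_shiftedMonomial_single [DecidableEq ι] (S : Finset ι) (u : ι → ℝ) (j : ι) :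
    fderiv ℝ (shiftedMonomial a S) u (Pi.single j 1) =
      if j ∈ S then shiftedMonomial a (S.erase j) u else 0 := by
  have hcoord : ∀ i ∈ S, HasFDerivAt (fun u : ι → ℝ => u i - a i)
      (ContinuousLinearMap.proj i : (ι → ℝ) →L[ℝ] ℝ) u :=
    fun i _ => (hasFDerivAt_apply i u).sub_const (a i)
  unfold shiftedMonomial
  rw [(HasFDerivAt.finsetProd hcoord).fderiv]
  simp [Pi.single_apply]

theorem iteratedFDeriv_shiftedMonomial_single [DecidableEq ι] {l : ℕ} (S : Finset ι)
    (idx : Fin l → ι) (u : ι → ℝ) :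
    iteratedFDeriv ℝ l (shiftedMonomial a S) u (fun t => Pi.single (idx t) 1) =
      if Function.Injective idx ∧ univ.image idx ⊆ S then
        shiftedMonomial a (S \ univ.image idx) u else 0 := by
  induction l generalizing S with
  | zero => simp [Function.injective_of_subsingleton]
  | succ l ih =>
    induction idx using Fin.snocCases with
    | snoc idx j =>
      rw [iteratedFDeriv_succ_apply_right_of_contDiff (contDiff_shiftedMonomial a S)]
      have hinit : Fin.init (fun t => (Pi.single (Fin.snoc (α := fun _ => ι) idx j t) 1 :
          ι → ℝ)) = fun t => Pi.single (idx t) 1 := by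
        ext t; simp [Fin.init]
      have himage : univ.image (Fin.snoc (α := fun _ => ι) idx j) =
          insert j (univ.image idx) := by
        ext i; simp [Fin.exists_fin_succ', eq_comm, or_comm]
      simp only [Fin.snoc_last, hinit, fderiv_shiftedMonomial_single, himage,
        Fin.snoc_injective_iff, Finset.insert_subset_iff]
      by_cases hj : j ∈ S
      · simp only [hj, if_true, ih, Finset.subset_erase, Finset.sdiff_insert,
          Finset.erase_sdiff_comm, Set.mem_range, Finset.mem_image, Finset.mem_univ, true_and]
        exact if_congr (by tauto) rfl rfl
      · simp [hj]

theorem iteratedFDeriv_shiftedMonomial_single_self [DecidableEq ι] {l : ℕ} (S : Finset ι)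
    (idx : Fin l → ι) :
    iteratedFDeriv ℝ l (shiftedMonomial a S) a (fun t => Pi.single (idx t) 1) =
      if Function.Injective idx ∧ univ.image idx = S then 1 else 0 := by
  rw [iteratedFDeriv_shiftedMonomial_single]
  by_cases hS : univ.image idx = S
  · simp [hS, shiftedMonomial]
  · simp only [hS, and_false, if_false]
    split_ifs with h
    · exact shiftedMonomial_self_of_nonempty a
        (Finset.sdiff_nonempty.mpr fun hsub => hS (h.2.antisymm hsub))
    · rfl

theorem iteratedFDeriv_sum_shiftedMonomial_single_self [DecidableEq ι] {l : ℕ}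
    (c : Finset ι → ℝ) (idx : Fin l → ι) :
    iteratedFDeriv ℝ l (fun u => ∑ S, c S • shiftedMonomial a S u) a
        (fun t => Pi.single (idx t) 1) =
      if Function.Injective idx then c (univ.image idx) else 0 := by
  have hcd : ∀ S ∈ (univ : Finset (Finset ι)),
      ContDiff ℝ l (fun u => c S • shiftedMonomial a S u) :=
    fun S _ => ((contDiff_shiftedMonomial a S).const_smul (c S)).of_le le_top
  calc _ = ∑ S, c S * iteratedFDeriv ℝ l (shiftedMonomial a S) a
          (fun t => Pi.single (idx t) 1) := by
        rw [iteratedFDeriv_sum hcd, Finset.sum_apply, _root_.sum_apply]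
        refine Finset.sum_congr rfl fun S _ => ?_
        rw [iteratedFDeriv_const_smul_apply'
          ((contDiff_shiftedMonomial a S).of_le le_top).contDiffAt]
        rfl
    _ = _ := by
        by_cases hinj : Function.Injective idx <;>
          simp [iteratedFDeriv_shiftedMonomial_single_self, hinj]

end ShiftedMonomial

theorem AddChar.map_finsetSum {ι A M : Type*} [AddCommMonoid A] [CommMonoid M]
    (ψ : AddChar A M) (s : Finset ι) (f : ι → A) :
    ψ (∑ i ∈ s, f i) = ∏ i ∈ s, ψ (f i) := by
  induction s using Finset.cons_induction with
  | empty => simp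
  | cons i s hi ih => rw [Finset.sum_cons, Finset.prod_cons, AddChar.map_add_eq_mul, ih]

def signChar : AddChar (ZMod 2) ℝ := AddChar.zmodChar 2 (by norm_num : (-1 : ℝ) ^ 2 = 1)

@[simp]
theorem signChar_one : signChar 1 = -1 := by
  rw [signChar, AddChar.zmodChar_apply, ZMod.val_one, pow_one]

theorem sum_signChar_dotProduct {ι : Type*} [Fintype ι] [DecidableEq ι] (c : ι → ZMod 2) :
    ∑ m : ι → ZMod 2, signChar (m ⬝ᵥ c) = if c = 0 then 2 ^ Fintype.card ι else 0 := by
  let ψ : AddChar (ι → ZMod 2) ℝ :=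
    signChar.compAddMonoidHom ((dotProductBilin (ZMod 2) (ZMod 2)).flip c).toAddMonoidHom
  have hψ : ψ = 0 ↔ c = 0 := by
    refine ⟨fun h => ?_, fun h => ?_⟩
    · ext j
      have hj : signChar (c j) = 1 := by
        simpa [ψ] using AddChar.eq_zero_iff.mp h (Pi.single j 1)
      by_contra hne
      rw [(by decide : ∀ b : ZMod 2, b ≠ 0 → b = 1) _ hne, signChar_one] at hj
      norm_num at hj
    · subst h; ext m; simp [ψ]
  simpa [ψ, hψ] using AddChar.sum_eq_ite ψ

theorem Matrix.vecMul_injective_of_rank_eq_card {m n K : Type*} [Fintype m] [Fintype n]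
    [Field K] {G : Matrix m n K} (hrank : G.rank = Fintype.card m) : Function.Injective G.vecMul :=
  Matrix.vecMul_injective_iff.mpr <| linearIndependent_iff_card_eq_finrank_span.mpr <|
    hrank.symm.trans G.rank_eq_finrank_span_row

theorem codePoly_eq_sum_shiftedMonomial {n : ℕ} (x : Fin n → ZMod 2) (u : Fin n → ℝ) :
    codePoly x u = ∑ S : Finset (Fin n), signChar (∑ i ∈ S, x i) *
      ((-1 : ℝ) ^ S.card * (2 : ℝ) ^ ((S.card : ℤ) - n) *
        shiftedMonomial (pcenter n) S u) := by
  have hfactor : ∀ i, (if x i = 1 then u i else 1 - u i) =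
      -signChar (x i) * (u i - pcenter n i) + 1 / 2 := by
    intro i
    rcases (by decide : ∀ b : ZMod 2, b = 0 ∨ b = 1) (x i) with h | h
    · simp [h, pcenter]
      ring
    · simp [h, pcenter]
  rw [codePoly, Finset.prod_congr rfl fun i _ => hfactor i, Fintype.prod_add]
  refine Finset.sum_congr rfl fun S _ => ?_
  rw [Finset.prod_const, Finset.card_compl, Fintype.card_fin, Finset.prod_mul_distrib,
    Finset.prod_neg, AddChar.map_finsetSum, shiftedMonomial]
  have hhalf : (1 / 2 : ℝ) ^ (n - S.card) = 2 ^ ((S.card : ℤ) - n) := by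
    rw [one_div, inv_pow, ← zpow_natCast, ← _root_.zpow_neg,
      Nat.cast_sub (by simpa using S.card_le_univ), neg_sub]
  rw [hhalf]
  ring

noncomputable def hfunCoeff {k n : ℕ} (G : Matrix (Fin k) (Fin n) (ZMod 2))
    (S : Finset (Fin n)) : ℝ :=
  if ∑ i ∈ S, Gᵀ i = 0 then (-1 : ℝ) ^ S.card * (2 : ℝ) ^ (-(n : ℤ) + k + S.card) else 0

theorem Hfun_eq_sum_shiftedMonomial {k n : ℕ} {G : Matrix (Fin k) (Fin n) (ZMod 2)}
    (hrank : G.rank = k) :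
    Hfun G = fun u => ∑ S, hfunCoeff G S • shiftedMonomial (pcenter n) S u := by
  have hinj : Function.Injective G.vecMul :=
    Matrix.vecMul_injective_of_rank_eq_card (by rw [hrank, Fintype.card_fin])
  have hcodeword : ∀ (m : Fin k → ZMod 2) (S : Finset (Fin n)),
      ∑ i ∈ S, (m ᵥ* G) i = m ⬝ᵥ ∑ i ∈ S, Gᵀ i :=
    fun m S => (dotProduct_sum m S _).symm
  have hcoeff : ∀ S : Finset (Fin n),
      (if ∑ i ∈ S, Gᵀ i = 0 then (2 : ℝ) ^ k else 0) *
          ((-1) ^ S.card * 2 ^ ((S.card : ℤ) - n)) = hfunCoeff G S := by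
    intro S
    unfold hfunCoeff
    split_ifs
    · rw [mul_left_comm, ← zpow_natCast (2 : ℝ) k, ← zpow_add₀ two_ne_zero]
      ring_nf
    · rw [zero_mul]
  funext u
  rw [Hfun, code, Finset.sum_image fun m _ m' _ h => hinj h]
  simp only [codePoly_eq_sum_shiftedMonomial, hcodeword]
  rw [Finset.sum_comm]
  refine Finset.sum_congr rfl fun S _ => ?_
  rw [← Finset.sum_mul, sum_signChar_dotProduct, Fintype.card_fin, ← hcoeff, smul_eq_mul]
  ring

theorem hfunCoeff_image {k n l : ℕ} (G : Matrix (Fin k) (Fin n) (ZMod 2))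
    {idx : Fin l → Fin n} (hinj : Function.Injective idx) :
    hfunCoeff G (univ.image idx) =
      if ∑ t, Gᵀ (idx t) = 0 then (-1) ^ l * 2 ^ (-(n : ℤ) + k + l) else 0 := by
  rw [hfunCoeff, Finset.sum_image (f := fun i => Gᵀ i) fun t _ t' _ h => hinj h,
    Finset.card_image_of_injective _ hinj, Finset.card_univ, Fintype.card_fin]

theorem stmt13_general {k n : ℕ}
    (G : Matrix (Fin k) (Fin n) (ZMod 2))
    (hrank : G.rank = k)
    (l : ℕ) (idx : Fin l → Fin n) :
    (¬ Function.Injective idx →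
      iteratedFDeriv ℝ l (Hfun G) (pcenter n) (fun t => Pi.single (idx t) (1:ℝ)) = 0) ∧
    (Function.Injective idx → (∑ t, Gᵀ (idx t)) ≠ 0 →
      iteratedFDeriv ℝ l (Hfun G) (pcenter n) (fun t => Pi.single (idx t) (1:ℝ)) = 0) ∧
    (Function.Injective idx → (∑ t, Gᵀ (idx t)) = 0 →
      iteratedFDeriv ℝ l (Hfun G) (pcenter n) (fun t => Pi.single (idx t) (1:ℝ)) =
        (-1 : ℝ) ^ l * (2 : ℝ) ^ (-(n : ℤ) + (k : ℤ) + (l : ℤ))) := by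
  have hderiv : iteratedFDeriv ℝ l (Hfun G) (pcenter n) (fun t => Pi.single (idx t) 1) =
      if Function.Injective idx then hfunCoeff G (univ.image idx) else 0 := by
    rw [Hfun_eq_sum_shiftedMonomial hrank, iteratedFDeriv_sum_shiftedMonomial_single_self]
  refine ⟨fun hinj => ?_, fun hinj hsum => ?_, fun hinj hsum => ?_⟩
  · rw [hderiv, if_neg hinj]
  · rw [hderiv, if_pos hinj, hfunCoeff_image G hinj, if_neg hsum]
  · rw [hderiv, if_pos hinj, hfunCoeff_image G hinj, if_pos hsum]

/-- Classification of the mixed partial derivatives `∂^l H/∂u_{i_1}⋯∂u_{i_l}(p)` (`l ≥ 2`):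
it vanishes when some index is repeated, or when the indices are distinct and
`g_{i_1} + ⋯ + g_{i_l} ≠ 0`; when the indices are distinct and `g_{i_1} + ⋯ + g_{i_l} = 0`
it equals `(-1)^l 2^(-n+k+l)`. -/
theorem stmt13 {k n : ℕ} (hk : 0 < k) (hkn : k ≤ n)
    (G : Matrix (Fin k) (Fin n) (ZMod 2))
    (hrank : G.rank = k) (hcols : ∀ i : Fin n, Gᵀ i ≠ 0)
    (l : ℕ) (hl : 2 ≤ l) (idx : Fin l → Fin n) :
    (¬ Function.Injective idx →
      iteratedFDeriv ℝ l (Hfun G) (pcenter n) (fun t => Pi.single (idx t) (1:ℝ)) = 0) ∧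
    (Function.Injective idx → (∑ t, Gᵀ (idx t)) ≠ 0 →
      iteratedFDeriv ℝ l (Hfun G) (pcenter n) (fun t => Pi.single (idx t) (1:ℝ)) = 0) ∧
    (Function.Injective idx → (∑ t, Gᵀ (idx t)) = 0 →
      iteratedFDeriv ℝ l (Hfun G) (pcenter n) (fun t => Pi.single (idx t) (1:ℝ)) =
        (-1 : ℝ) ^ l * (2 : ℝ) ^ (-(n : ℤ) + (k : ℤ) + (l : ℤ))) :=
  stmt13_general G hrank l idx
end

section
/- Let l ≥ 2, let ε ∈ (0, 1/2), and for each i define the truncated map f̃_i(u) = u_i + Σ_{(i_1,…,i_l)∈Θ_i^{(l)}} (−2)^{l−1} (u_{i_1} − 1/2)⋯(u_{i_l} − 1/2), where Θ_i^{(l)} = {(i_1,…,i_l) : 1 ≤ i_1 < ⋯ < i_l ≤ n, i_k ≠ i for all k, g_i + g_{i_1} + ⋯ + g_{i_l} = 0 in 𝔽₂^k}. Let y ∈ C be a codeword and define u⁰ ∈ ℝ^n by u⁰_i = ε if y_i = 0 and u⁰_i = 1 − ε if y_i = 1. Then for every i: if y_i = 1 then f̃_i(u⁰) ≥ 1 −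 ε > 1/2, and if y_i = 0 then f̃_i(u⁰) ≤ ε < 1/2. Consequently the approximate ML decoding rule (which decodes bit i as 1 iff f̃_i(u⁰) ≥ 1/2) decodes every codeword to itself. -/
open Matrix Finset

/-- The truncated map `f̃_i(u) = u_i + Σ_{(i_1,…,i_l) ∈ Θ_i^(l)} (-2)^(l-1)
(u_{i_1} - 1/2) ⋯ (u_{i_l} - 1/2)`, where the tuples `i_1 < ⋯ < i_l` are identified with
`l`-element subsets `s` of the indices, subject to `i ∉ s` and
`g_i + Σ_{j ∈ s} g_j = 0`. -/
noncomputable def ftilde {k n : ℕ} (G : Matrix (Fin k) (Fin n) (ZMod 2)) (l : ℕ)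
    (u : Fin n → ℝ) (i : Fin n) : ℝ :=
  u i + ∑ s ∈ Finset.powersetCard l Finset.univ,
    if i ∉ s ∧ (Gᵀ i + ∑ j ∈ s, Gᵀ j) = 0 then
      (-2 : ℝ) ^ (l - 1) * ∏ j ∈ s, (u j - 1/2)
    else 0

/-!
Write `u⁰_j - 1/2 = -(1/2 - ε) χ(y_j)` with the character `χ(a) = (-1)^a` of `𝔽₂`. A set
`s ∈ Θ_i^(l)` is a dependency `g_i + Σ_{j ∈ s} g_j = 0` among the columns, so every codeword
satisfies the parity check `y_i + Σ_{j ∈ s} y_j = 0`, i.e. `∏_{j ∈ s} χ(y_j) = χ(y_i)`. Hence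
each term of `f̃_i(u⁰) - u⁰_i` equals `-2^(l-1) (1/2 - ε)^l χ(y_i)`: all corrections push
`u⁰_i` away from `1/2`, towards the bit `y_i`.
-/

noncomputable def zmodTwoSign (a : ZMod 2) : ℝ := (-1) ^ a.val

@[simp] lemma zmodTwoSign_zero : zmodTwoSign 0 = 1 := by simp [zmodTwoSign]

@[simp] lemma zmodTwoSign_one : zmodTwoSign 1 = -1 := by simp [zmodTwoSign, ZMod.val_one]

lemma zmodTwoSign_add (a b : ZMod 2) : zmodTwoSign (a + b) = zmodTwoSign a * zmodTwoSign b := by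
  rw [zmodTwoSign, ZMod.val_add, ← neg_one_pow_eq_pow_mod_two, pow_add]; rfl

lemma zmodTwoSign_sum {ι : Type*} (s : Finset ι) (f : ι → ZMod 2) :
    zmodTwoSign (∑ j ∈ s, f j) = ∏ j ∈ s, zmodTwoSign (f j) := by
  classical
  induction s using Finset.induction_on with
  | empty => simp
  | insert a s ha ih => rw [sum_insert ha, prod_insert ha, zmodTwoSign_add, ih]

lemma vecMul_apply_add_sum_eq_zero {R κ ι : Type*} [CommSemiring R] [Fintype κ]
    (m : κ → R) (G : Matrix κ ι R) {i : ι} {s : Finset ι}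
    (h : Gᵀ i + ∑ j ∈ s, Gᵀ j = 0) :
    vecMul m G i + ∑ j ∈ s, vecMul m G j = 0 := by
  have hcol : ∀ j, vecMul m G j = m ⬝ᵥ Gᵀ j := fun j => rfl
  rw [hcol, sum_congr rfl fun j _ => hcol j, ← dotProduct_sum m s (fun j => (Gᵀ j : κ → R)),
    ← dotProduct_add, h, dotProduct_zero]

lemma neg_two_pow_pred_mul_neg_pow {R : Type*} [CommRing R] {l : ℕ} (hl : 1 ≤ l) (δ : R) :
    (-2 : R) ^ (l - 1) * (-δ) ^ l = -(2 ^ (l - 1) * δ ^ l) := by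
  obtain ⟨m, rfl⟩ := Nat.exists_eq_add_of_le' hl
  rw [Nat.add_sub_cancel, pow_succ (-δ), ← mul_assoc, ← mul_pow, pow_succ δ]
  ring

lemma zmodTwoSign_mul_ftilde_sub_self_nonpos {k n l : ℕ} {G : Matrix (Fin k) (Fin n) (ZMod 2)}
    {y : Fin n → ZMod 2} (hy : y ∈ code G) (hl : 1 ≤ l) {u : Fin n → ℝ} {δ : ℝ} (hδ : 0 ≤ δ)
    (hu : ∀ j, u j - 1/2 = -δ * zmodTwoSign (y j)) (i : Fin n) :
    zmodTwoSign (y i) * (ftilde G l u i - u i) ≤ 0 := by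
  obtain ⟨m, -, rfl⟩ := mem_image.mp hy
  rw [ftilde, add_sub_cancel_left, mul_sum]
  refine sum_nonpos fun s hs => ?_
  split_ifs with h
  · have parity : zmodTwoSign (vecMul m G i) * ∏ j ∈ s, zmodTwoSign (vecMul m G j) = 1 := by
      rw [← zmodTwoSign_sum, ← zmodTwoSign_add, vecMul_apply_add_sum_eq_zero m G h.2,
        zmodTwoSign_zero]
    rw [prod_congr rfl fun j _ => hu j, prod_mul_distrib, prod_const,
      (mem_powersetCard.mp hs).2]
    calc zmodTwoSign (vecMul m G i) *
          ((-2) ^ (l - 1) * ((-δ) ^ l * ∏ j ∈ s, zmodTwoSign (vecMul m G j)))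
        = (-2) ^ (l - 1) * (-δ) ^ l := by linear_combination (-2) ^ (l - 1) * (-δ) ^ l * parity
      _ = -(2 ^ (l - 1) * δ ^ l) := neg_two_pow_pred_mul_neg_pow hl δ
      _ ≤ 0 := neg_nonpos.mpr (by positivity)
  · rw [mul_zero]

theorem stmt17_general {k n : ℕ}
    (G : Matrix (Fin k) (Fin n) (ZMod 2))
    (l : ℕ) (hl : 2 ≤ l) (ε : ℝ) (hε : ε ∈ Set.Ioo (0 : ℝ) (1/2))
    (y : Fin n → ZMod 2) (hy : y ∈ code G) :
    ∀ i : Fin n,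
      (y i = 1 → 1 - ε ≤ ftilde G l (fun j => if y j = 0 then ε else 1 - ε) i ∧
        (1/2 : ℝ) < 1 - ε) ∧
      (y i = 0 → ftilde G l (fun j => if y j = 0 then ε else 1 - ε) i ≤ ε ∧
        ε < (1/2 : ℝ)) ∧
      (if (1/2 : ℝ) ≤ ftilde G l (fun j => if y j = 0 then ε else 1 - ε) i
        then (1 : ZMod 2) else 0) = y i := by
  intro i
  obtain ⟨hε0, hε2⟩ := hε
  set u : Fin n → ℝ := fun j => if y j = 0 then ε else 1 - ε
  have hbit : ∀ a : ZMod 2, a = 0 ∨ a = 1 := by decide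
  have hu : ∀ j, u j - 1/2 = -(1/2 - ε) * zmodTwoSign (y j) := fun j => by
    rcases hbit (y j) with h | h
    · simp [u, h]
    · simp only [u, h, one_ne_zero, ↓reduceIte, zmodTwoSign_one]; ring
  have key := zmodTwoSign_mul_ftilde_sub_self_nonpos hy (by omega : 1 ≤ l) (by linarith) hu i
  rcases hbit (y i) with h | h
  · have hle : ftilde G l u i ≤ ε := by
      simp only [u, h, ↓reduceIte, zmodTwoSign_zero] at key; linarith
    exact ⟨by simp [h], fun _ => ⟨hle, hε2⟩, by rw [if_neg (by linarith), h]⟩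
  · have hge : 1 - ε ≤ ftilde G l u i := by
      simp only [u, h, one_ne_zero, ↓reduceIte, zmodTwoSign_one] at key; linarith
    exact ⟨fun _ => ⟨hge, by linarith⟩, by simp [h], by rw [if_pos (by linarith), h]⟩

/-- For a codeword `y ∈ C` and the initial point `u⁰` (`u⁰_i = ε` if `y_i = 0`,
`u⁰_i = 1-ε` if `y_i = 1`, `0 < ε < 1/2`): if `y_i = 1` then `f̃_i(u⁰) ≥ 1-ε > 1/2`, and
if `y_i = 0` then `f̃_i(u⁰) ≤ ε < 1/2`; consequently the approximate ML decoding rule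
(decode bit `i` as `1` iff `f̃_i(u⁰) ≥ 1/2`) decodes every codeword to itself. -/
theorem stmt17 {k n : ℕ} (hk : 0 < k) (hkn : k ≤ n)
    (G : Matrix (Fin k) (Fin n) (ZMod 2))
    (hrank : G.rank = k) (hcols : ∀ i : Fin n, Gᵀ i ≠ 0)
    (l : ℕ) (hl : 2 ≤ l) (ε : ℝ) (hε : ε ∈ Set.Ioo (0 : ℝ) (1/2))
    (y : Fin n → ZMod 2) (hy : y ∈ code G) :
    ∀ i : Fin n,
      (y i = 1 → 1 - ε ≤ ftilde G l (fun j => if y j = 0 then ε else 1 - ε) i ∧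
        (1/2 : ℝ) < 1 - ε) ∧
      (y i = 0 → ftilde G l (fun j => if y j = 0 then ε else 1 - ε) i ≤ ε ∧
        ε < (1/2 : ℝ)) ∧
      (if (1/2 : ℝ) ≤ ftilde G l (fun j => if y j = 0 then ε else 1 - ε) i
        then (1 : ZMod 2) else 0) = y i :=
  stmt17_general G l hl ε hε y hy
end
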